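/- Let n ≥ 1, k ≥ 1, α ∈ [n]^n, and suppose all cars follow the k-Naples parking rule. Suppose there are i, j ∈ [n] such that car c_i parks in spot j, i.e. ψ_k(c_i) = j, and a_i < j. Then no car with preference in [j, n] parks in any spot in [1, j]: for every h ∈ [n] with a_h ≥ j, ψ_k(c_h) ∉ {1,…,j}. Moreover, if α is a k-Naples parking function (α ∈ PF_{n,k}), then u_α(j) ≤ −1. -/

import Mathlib

/-!
When car `c_i` drives forward from `a_i` to `j`, every spot of `[max 1 (a_i - k), j]` is occupied
once it has parked. A car preferring a spot `≥ j` that arrives later searches backwards from its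
preference by at most `k` spots, so it can only land in `[1, j]` inside that occupied block; one that
arrived earlier and parked at `s ≤ j` would have had to pass `j` or take it, occupying `j` before
`c_i` arrives. Hence, in a `k`-Naples parking function, the `#{h : a_h ≥ j}` cars preferring
`[j, n]` park in distinct spots of `(j, n]`, which gives `u_α(j) ≤ -1`.
-/

open Finset

/-- The spot where a single car parks on a one-way street with spots `1,…,n`:
`occ` is the set of already occupied spots, `p` is the car's preference, and
`r` is its backward allowance (it follows the `r`-Naples rule).  If spot `p`
is free the car parks there; otherwise it checks spots `p-1, p-2, …, max (p-r) 1`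
and parks in the first free one among these; otherwise it parks in the smallest
free spot `> p` (and `≤ n`); `none` means the car fails to park. -/
def parkSpot (n : ℕ) (occ : Finset ℕ) (p r : ℕ) : Option ℕ :=
  if p ∈ occ then
    if hb : ((Finset.Ico (max 1 (p - r)) p).filter (fun j => j ∉ occ)).Nonempty then
      some (((Finset.Ico (max 1 (p - r)) p).filter (fun j => j ∉ occ)).max' hb)
    else if hf : ((Finset.Ioc p n).filter (fun j => j ∉ occ)).Nonempty then
      some (((Finset.Ioc p n).filter (fun j => j ∉ occ)).min' hf)
    else none
  else some p

/-- The set of occupied spots after the first `i` of the `m` cars (with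
preferences `a` and backward allowances `r`) have attempted to park on a
street with `n` spots. -/
def occUpTo (n m : ℕ) (a r : Fin m → ℕ) : ℕ → Finset ℕ
  | 0 => ∅
  | i + 1 =>
    let occ := occUpTo n m a r i
    if h : i < m then
      match parkSpot n occ (a ⟨i, h⟩) (r ⟨i, h⟩) with
      | some s => insert s occ
      | none => occ
    else occ

/-- The outcome map: the spot where car `c_i` parks (`none` if it fails to park),
when the `m` cars with preferences `a` park on `n` spots, car `c_i` following
the `r i`-Naples rule. -/
def outcome (n m : ℕ) (a r : Fin m → ℕ) (i : Fin m) : Option ℕ :=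
  parkSpot n (occUpTo n m a r i.val) (a i) (r i)

/-- The outcome map with values in `ℕ∞`: failure to park is recorded as `∞`. -/
def outcomeE (n m : ℕ) (a r : Fin m → ℕ) (i : Fin m) : ENat :=
  (outcome n m a r i).elim ⊤ (fun s => (s : ENat))

/-- All `m` cars (preferences `a`, car `c_i` following the `r i`-Naples rule)
are able to park on the street with `n` spots.  For `m = n` this says that `r`
is a parking strategy for `a`, i.e. `(a, r) ∈ PR_n`. -/
def AllPark (n m : ℕ) (a r : Fin m → ℕ) : Prop :=
  ∀ i : Fin m, (outcome n m a r i).isSome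

instance (n m : ℕ) (a r : Fin m → ℕ) : Decidable (AllPark n m a r) := by
  unfold AllPark; infer_instance

/-- `a ∈ PF_{n,k}`: `a` is a `k`-Naples parking function of length `n`. -/
def NaplesPF (n k : ℕ) (a : Fin n → ℕ) : Prop :=
  AllPark n n a (fun _ => k)

instance (n k : ℕ) (a : Fin n → ℕ) : Decidable (NaplesPF n k a) := by
  unfold NaplesPF; infer_instance

/-- `a ∈ PF_n`: `a` is a (standard) parking function of length `n`. -/
def IsPF (n : ℕ) (a : Fin n → ℕ) : Prop := NaplesPF n 0 a

instance (n : ℕ) (a : Fin n → ℕ) : Decidable (IsPF n a) := by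
  unfold IsPF; infer_instance

/-- `u_α(j) = Σ_{i=j}^n |α|_i − (n−j+1) = #{i : a_i ≥ j} − (n−j+1)`. -/
def ucount (n : ℕ) (a : Fin n → ℕ) (j : ℕ) : ℤ :=
  ((Finset.univ.filter (fun i : Fin n => j ≤ a i)).card : ℤ) - ((n : ℤ) - (j : ℤ) + 1)

/-- `U_α = {j ∈ [n] : u_α(j) ≥ 1}`. -/
def Uset (n : ℕ) (a : Fin n → ℕ) : Finset ℕ :=
  (Finset.Icc 1 n).filter (fun j => 1 ≤ ucount n a j)

/-- A parking preference of length `n` is complete if `U_α = {2,…,n}`. -/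
def Complete (n : ℕ) (a : Fin n → ℕ) : Prop :=
  Uset n a = Finset.Icc 2 n

instance (n : ℕ) (a : Fin n → ℕ) : Decidable (Complete n a) := by
  unfold Complete; infer_instance

/-- `[p,q]` is a maximal interval of `U_α`. -/
def MaxInterval (n : ℕ) (a : Fin n → ℕ) (p q : ℕ) : Prop :=
  p ≤ q ∧ (∀ j, p ≤ j → j ≤ q → j ∈ Uset n a) ∧ p - 1 ∉ Uset n a ∧ q + 1 ∉ Uset n a

section parkSpot

variable {n p r s : ℕ} {occ : Finset ℕ}

lemma parkSpot_eq_some_cases (h : parkSpot n occ p r = some s) :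
    (s = p ∧ p ∉ occ) ∨
    (p ∈ occ ∧ s ∉ occ ∧ max 1 (p - r) ≤ s ∧ s < p ∧
      ∀ t, s < t → t < p → t ∈ occ) ∨
    (p ∈ occ ∧ (∀ t, max 1 (p - r) ≤ t → t < p → t ∈ occ) ∧
      s ∉ occ ∧ p < s ∧ s ≤ n ∧ ∀ t, p < t → t < s → t ∈ occ) := by
  unfold parkSpot at h
  split_ifs at h with hp hback hfwd
  · obtain rfl := Option.some_injective _ h
    obtain ⟨hmem, hfree⟩ := mem_filter.1 (max'_mem _ hback)
    refine .inr (.inl ⟨hp, hfree, (mem_Ico.1 hmem).1, (mem_Ico.1 hmem).2, fun t hst htp => ?_⟩)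
    by_contra ht
    exact (le_max' _ t (mem_filter.2 ⟨mem_Ico.2 ⟨by grind, htp⟩, ht⟩)).not_gt hst
  · obtain rfl := Option.some_injective _ h
    obtain ⟨hmem, hfree⟩ := mem_filter.1 (min'_mem _ hfwd)
    refine .inr (.inr ⟨hp, fun t hpt htp => ?_, hfree, (mem_Ioc.1 hmem).1, (mem_Ioc.1 hmem).2,
      fun t hpt hts => ?_⟩)
    · by_contra ht
      exact hback ⟨t, mem_filter.2 ⟨mem_Ico.2 ⟨hpt, htp⟩, ht⟩⟩
    · by_contra ht
      exact (min'_le _ t (mem_filter.2 ⟨mem_Ioc.2 ⟨hpt, by grind⟩, ht⟩)).not_gt hts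
  · exact .inl ⟨(Option.some_injective _ h).symm, hp⟩

lemma parkSpot_notMem (h : parkSpot n occ p r = some s) : s ∉ occ := by
  rcases parkSpot_eq_some_cases h with ⟨rfl, hs⟩ | ⟨-, hs, -⟩ | ⟨-, -, hs, -⟩ <;> exact hs

lemma parkSpot_le (h : parkSpot n occ p r = some s) (hp : p ≤ n) : s ≤ n := by
  rcases parkSpot_eq_some_cases h with ⟨rfl, -⟩ | ⟨-, -, -, hsp, -⟩ | ⟨-, -, -, -, hsn, -⟩ <;> omega

lemma max_one_sub_le_parkSpot (h : parkSpot n occ p r = some s) (hp : 1 ≤ p) :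
    max 1 (p - r) ≤ s := by
  rcases parkSpot_eq_some_cases h with ⟨rfl, -⟩ | ⟨-, -, hlo, -⟩ | ⟨-, -, -, hps, -⟩ <;> omega

lemma mem_of_parkSpot_lt_of_le (h : parkSpot n occ p r = some s) {t : ℕ} (hst : s < t)
    (htp : t ≤ p) : t ∈ occ := by
  rcases parkSpot_eq_some_cases h with ⟨rfl, -⟩ | ⟨hp, -, -, -, hmid⟩ | ⟨-, -, -, hps, -⟩
  · omega
  · rcases htp.lt_or_eq with htp | rfl
    exacts [hmid t hst htp, hp]
  · omega

lemma Icc_subset_insert_parkSpot (h : parkSpot n occ p r = some s) (hps : p < s) :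
    Icc (max 1 (p - r)) s ⊆ insert s occ := by
  rcases parkSpot_eq_some_cases h with ⟨rfl, -⟩ | ⟨-, -, -, hsp, -⟩ | ⟨hp, hback, -, -, -, hfwd⟩
  · omega
  · omega
  intro t ht
  obtain ⟨hlo, hhi⟩ := mem_Icc.1 ht
  rw [mem_insert]
  rcases lt_trichotomy t p with htp | rfl | htp
  · exact .inr (hback t hlo htp)
  · exact .inr hp
  · rcases hhi.lt_or_eq with hts | rfl
    exacts [.inr (hfwd t htp hts), .inl rfl]

end parkSpot

section occUpTo

variable {n m : ℕ} {a r : Fin m → ℕ}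

lemma occUpTo_succ_of_outcome {i : Fin m} {s : ℕ} (h : outcome n m a r i = some s) :
    occUpTo n m a r (i + 1) = insert s (occUpTo n m a r i) := by
  rw [occUpTo, dif_pos i.isLt]
  simp only [Fin.eta, show parkSpot n (occUpTo n m a r i) (a i) (r i) = some s from h]

lemma occUpTo_subset_succ (i : ℕ) : occUpTo n m a r i ⊆ occUpTo n m a r (i + 1) := by
  conv_rhs => rw [occUpTo]
  split_ifs with hi
  · split <;> simp [subset_insert]
  · rfl

lemma occUpTo_mono : Monotone (occUpTo n m a r) :=
  monotone_nat_of_le_succ occUpTo_subset_succ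

lemma mem_occUpTo_succ_of_outcome {i : Fin m} {s : ℕ} (h : outcome n m a r i = some s) :
    s ∈ occUpTo n m a r (i + 1) := by
  rw [occUpTo_succ_of_outcome h]
  exact mem_insert_self _ _

lemma outcome_notMem_occUpTo {i : Fin m} {s : ℕ} (h : outcome n m a r i = some s) :
    s ∉ occUpTo n m a r i :=
  parkSpot_notMem h

lemma outcome_le {i : Fin m} {s : ℕ} (h : outcome n m a r i = some s) (hi : a i ≤ n) :
    s ≤ n :=
  parkSpot_le h hi

lemma outcome_injective {i i' : Fin m} {s : ℕ} (h : outcome n m a r i = some s)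
    (h' : outcome n m a r i' = some s) : i = i' := by
  wlog hlt : i < i' generalizing i i'
  · rcases (not_lt.1 hlt).lt_or_eq with hlt | rfl
    exacts [(this h' h hlt).symm, rfl]
  exact absurd (occUpTo_mono (Nat.succ_le_of_lt hlt) (mem_occUpTo_succ_of_outcome h))
    (outcome_notMem_occUpTo h')

lemma card_le_of_outcome_mem {S : Finset (Fin m)} {T : Finset ℕ}
    (hST : ∀ i ∈ S, ∃ s ∈ T, outcome n m a r i = some s) : #S ≤ #T := by
  choose! f hfT hf using hST
  exact card_le_card_of_injOn f hfT fun i hi i' hi' hii' =>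
    outcome_injective (hf i hi) (hii' ▸ hf i' hi')

end occUpTo

section forwardPark

variable {n m k : ℕ} {a : Fin m → ℕ} {i : Fin m} {j : ℕ}

lemma Icc_subset_occUpTo_of_outcome_gt (hpark : outcome n m a (fun _ => k) i = some j)
    (hlt : a i < j) : Icc (max 1 (a i - k)) j ⊆ occUpTo n m a (fun _ => k) (i + 1) := by
  rw [occUpTo_succ_of_outcome hpark]
  exact Icc_subset_insert_parkSpot hpark hlt

lemma lt_of_outcome_of_le_pref (hpark : outcome n m a (fun _ => k) i = some j) (hlt : a i < j)
    {h : Fin m} (hh : j ≤ a h) {s : ℕ} (hs : outcome n m a (fun _ => k) h = some s) : j < s := by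
  by_contra! hsj
  rcases lt_trichotomy h i with hhi | rfl | hih
  · have hs' : parkSpot n _ (a h) k = some s := hs
    apply outcome_notMem_occUpTo hpark
    rcases hsj.lt_or_eq with hsj | rfl
    · exact occUpTo_mono hhi.le (mem_of_parkSpot_lt_of_le hs' hsj hh)
    · exact occUpTo_mono (Nat.succ_le_of_lt hhi) (mem_occUpTo_succ_of_outcome hs)
  · omega
  · have hlo := max_one_sub_le_parkSpot (show parkSpot n _ (a h) k = some s from hs) (by omega)
    apply outcome_notMem_occUpTo hs
    exact occUpTo_mono (Nat.succ_le_of_lt hih)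
      (Icc_subset_occUpTo_of_outcome_gt hpark hlt (mem_Icc.2 ⟨by omega, hsj⟩))

end forwardPark

theorem statement7_general (n k : ℕ) (a : Fin n → ℕ)
    (ha : ∀ i, a i ∈ Finset.Icc 1 n) (i : Fin n) (j : ℕ)
    (hpark : outcome n n a (fun _ => k) i = some j) (hlt : a i < j) :
    (∀ h : Fin n, j ≤ a h → ∀ s, 1 ≤ s → s ≤ j →
        outcome n n a (fun _ => k) h ≠ some s) ∧
    (NaplesPF n k a → ucount n a j ≤ -1) := by
  refine ⟨fun h hh s _ hsj hs => (lt_of_outcome_of_le_pref hpark hlt hh hs).not_ge hsj,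
    fun hPF => ?_⟩
  have hjn : j ≤ n := outcome_le hpark (mem_Icc.1 (ha i)).2
  have hcard : #(univ.filter fun h => j ≤ a h) ≤ #(Ioc j n) := by
    refine card_le_of_outcome_mem (n := n) (a := a) (r := fun _ => k) fun h hh => ?_
    obtain ⟨s, hs⟩ := Option.isSome_iff_exists.1 (hPF h)
    exact ⟨s, mem_Ioc.2 ⟨lt_of_outcome_of_le_pref hpark hlt (mem_filter.1 hh).2 hs,
      outcome_le hs (mem_Icc.1 (ha h)).2⟩, hs⟩
  rw [Nat.card_Ioc] at hcard
  unfold ucount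
  omega

/-- if all cars follow the `k`-Naples rule and car `c_i` parks in a
spot `j > a_i`, then no car with preference in `[j,n]` parks in a spot of `[1,j]`;
moreover, if `α ∈ PF_{n,k}` then `u_α(j) ≤ −1`. -/
theorem statement7 (n k : ℕ) (hn : 1 ≤ n) (hk : 1 ≤ k) (a : Fin n → ℕ)
    (ha : ∀ i, a i ∈ Finset.Icc 1 n) (i : Fin n) (j : ℕ)
    (hpark : outcome n n a (fun _ => k) i = some j) (hlt : a i < j) :
    (∀ h : Fin n, j ≤ a h → ∀ s, 1 ≤ s → s ≤ j →
        outcome n n a (fun _ => k) h ≠ some s) ∧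
    (NaplesPF n k a → ucount n a j ≤ -1) :=
  statement7_general n k a ha i j hpark hlt
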